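/- Let d₁, d₂ ∈ [−1,1], let U, V ∈ SO(2), and let S = V·diag(d₁,d₂)·U. Then h₂((1+‖S e₁‖)/2) + h₂((1+‖S e₂‖)/2) ≥ h₂((1+d₁)/2) + h₂((1+d₂)/2), where S e₁ and S e₂ are the two columns of S. -/

import Mathlib

/-- Binary entropy function (base-2 logarithm), with the convention `0 * log 0 = 0`. -/
noncomputable def h2 (p : ℝ) : ℝ := -(p * Real.logb 2 p) - (1 - p) * Real.logb 2 (1 - p)

/-- `M` is a real 2×2 special orthogonal matrix. -/
def SO2 (M : Matrix (Fin 2) (Fin 2) ℝ) : Prop := M.transpose * M = 1 ∧ M.det = 1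

/-!
Write `G x = h₂((1 + √x)/2)`, so that the left side is `G d₁² + G d₂²`. Orthogonality of `V` leaves
the column norms of `S` unchanged when `V` is dropped, and orthogonality of `U` then makes the
squared column norms the convex combinations `t d₁² + (1-t) d₂²` and `(1-t) d₁² + t d₂²` with
`t = U₀₀²`. Summing the two concavity inequalities for `G` gives the claim. `G` is concave because
`G'(x) = -φ(√x)/(4 log 2)` with `φ(u) = (log(1+u) - log(1-u))/u = ∑ 2u^{2k}/(2k+1)` increasing.
-/

open Real Set
open scoped Matrix

lemma h2_eq_binEntropy_div_log_two (p : ℝ) : h2 p = binEntropy p / log 2 := by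
  unfold h2 binEntropy logb
  rw [log_inv, log_inv]
  ring

lemma h2_one_sub (p : ℝ) : h2 (1 - p) = h2 p := by
  simp only [h2_eq_binEntropy_div_log_two, binEntropy_one_sub]

lemma h2_one_add_div_two_eq_sqrt_sq (d : ℝ) : h2 ((1 + d) / 2) = h2 ((1 + √(d ^ 2)) / 2) := by
  rw [sqrt_sq_eq_abs]
  rcases abs_cases d with ⟨h, _⟩ | ⟨h, _⟩
  · rw [h]
  · rw [h, ← h2_one_sub]
    ring_nf

lemma hasSum_log_one_add_sub_log_one_sub_div {u : ℝ} (hu : u ∈ Ioo (0 : ℝ) 1) :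
    HasSum (fun k : ℕ => 2 * (1 / (2 * k + 1)) * u ^ (2 * k))
      ((log (1 + u) - log (1 - u)) / u) := by
  refine ((hasSum_log_sub_log_of_abs_lt_one
    (abs_lt.2 ⟨by linarith [hu.1], hu.2⟩)).div_const u).congr_fun fun k => ?_
  rw [pow_succ, ← mul_assoc, mul_div_cancel_right₀ _ hu.1.ne']

lemma monotoneOn_log_one_add_sub_log_one_sub_div :
    MonotoneOn (fun u : ℝ => (log (1 + u) - log (1 - u)) / u) (Ioo 0 1) := by
  intro u hu v hv huv
  refine hasSum_le (fun k => ?_) (hasSum_log_one_add_sub_log_one_sub_div hu)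
    (hasSum_log_one_add_sub_log_one_sub_div hv)
  gcongr
  exact hu.1.le

lemma hasDerivAt_binEntropy_one_add_sqrt_div_two {x : ℝ} (hx : x ∈ Ioo (0 : ℝ) 1) :
    HasDerivAt (fun x => binEntropy ((1 + √x) / 2))
      (-((log (1 + √x) - log (1 - √x)) / √x) / 4) x := by
  have hu₀ : 0 < √x := sqrt_pos.2 hx.1
  have hu₁ : √x < 1 := sqrt_one ▸ sqrt_lt_sqrt hx.1.le hx.2
  have hp : HasDerivAt (fun x => (1 + √x) / 2) (1 / (2 * √x) / 2) x :=
    ((hasDerivAt_sqrt hx.1.ne').const_add 1).div_const 2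
  refine ((hasDerivAt_binEntropy (by positivity) (by linarith)).comp x hp).congr_deriv ?_
  rw [show 1 - (1 + √x) / 2 = (1 - √x) / 2 by ring,
    log_div (by linarith) two_ne_zero, log_div (by positivity) two_ne_zero]
  field_simp
  ring

lemma concaveOn_binEntropy_one_add_sqrt_div_two :
    ConcaveOn ℝ (Icc 0 1) (fun x => binEntropy ((1 + √x) / 2)) := by
  refine AntitoneOn.concaveOn_of_deriv (convex_Icc 0 1) (by fun_prop) ?_ ?_ <;>
    rw [interior_Icc]
  · exact fun x hx =>
      (hasDerivAt_binEntropy_one_add_sqrt_div_two hx).differentiableAt.differentiableWithinAt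
  · intro x hx y hy hxy
    have hsqrt {z : ℝ} (hz : z ∈ Ioo (0 : ℝ) 1) : √z ∈ Ioo (0 : ℝ) 1 :=
      ⟨sqrt_pos.2 hz.1, sqrt_one ▸ sqrt_lt_sqrt hz.1.le hz.2⟩
    have hφ := monotoneOn_log_one_add_sub_log_one_sub_div (hsqrt hx) (hsqrt hy)
      (sqrt_le_sqrt hxy)
    rw [(hasDerivAt_binEntropy_one_add_sqrt_div_two hx).deriv,
      (hasDerivAt_binEntropy_one_add_sqrt_div_two hy).deriv]
    dsimp only at hφ
    linarith

lemma concaveOn_h2_one_add_sqrt_div_two :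
    ConcaveOn ℝ (Icc 0 1) (fun x => h2 ((1 + √x) / 2)) := by
  simp_rw [h2_eq_binEntropy_div_log_two, div_eq_inv_mul _ (log 2)]
  exact concaveOn_binEntropy_one_add_sqrt_div_two.smul (inv_nonneg.2 (log_nonneg one_le_two))

lemma ConcaveOn.add_le_add_convexComb_swap {E : Type*} [AddCommGroup E] [Module ℝ E]
    {s : Set E} {f : E → ℝ} (hf : ConcaveOn ℝ s f) {a b : E} (ha : a ∈ s) (hb : b ∈ s)
    {t : ℝ} (ht₀ : 0 ≤ t) (ht₁ : t ≤ 1) :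
    f a + f b ≤ f (t • a + (1 - t) • b) + f ((1 - t) • a + t • b) := by
  have h₁ := hf.2 ha hb ht₀ (sub_nonneg.2 ht₁) (by ring)
  have h₂ := hf.2 ha hb (sub_nonneg.2 ht₁) ht₀ (by ring)
  simp only [smul_eq_mul] at h₁ h₂
  linarith

lemma Matrix.sum_sq_mul_apply_of_transpose_mul_self_eq_one {n m : Type*} [Fintype n]
    [DecidableEq n] {V : Matrix n n ℝ} (hV : Vᵀ * V = 1) (A : Matrix n m ℝ) (j : m) :
    ∑ i, (V * A) i j ^ 2 = ∑ i, A i j ^ 2 := by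
  have h : ((V * A)ᵀ * (V * A)) j j = (Aᵀ * A) j j := by
    rw [Matrix.transpose_mul, Matrix.mul_assoc, ← Matrix.mul_assoc Vᵀ, hV, Matrix.one_mul]
  simpa only [Matrix.mul_apply, Matrix.transpose_apply, sq] using h

lemma Matrix.sq_apply_of_transpose_mul_self_eq_one {U : Matrix (Fin 2) (Fin 2) ℝ}
    (hU : Uᵀ * U = 1) :
    U 1 0 ^ 2 = 1 - U 0 0 ^ 2 ∧ U 0 1 ^ 2 = 1 - U 0 0 ^ 2 ∧ U 1 1 ^ 2 = U 0 0 ^ 2 := by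
  have hU' : U * Uᵀ = 1 := mul_eq_one_comm.mp hU
  have c₀ := congrFun (congrFun hU 0) 0
  have c₁ := congrFun (congrFun hU 1) 1
  have r₀ := congrFun (congrFun hU' 0) 0
  simp only [Matrix.mul_apply, Fin.sum_univ_two, Matrix.transpose_apply, Matrix.one_apply_eq]
    at c₀ c₁ r₀
  refine ⟨?_, ?_, ?_⟩ <;> linarith

theorem stmt10 (d1 d2 : ℝ) (hd1 : d1 ∈ Set.Icc (-1 : ℝ) 1) (hd2 : d2 ∈ Set.Icc (-1 : ℝ) 1)
    (U V : Matrix (Fin 2) (Fin 2) ℝ) (hU : SO2 U) (hV : SO2 V)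
    (S : Matrix (Fin 2) (Fin 2) ℝ)
    (hS : S = V * Matrix.diagonal ![d1, d2] * U) :
    h2 ((1 + d1) / 2) + h2 ((1 + d2) / 2) ≤
      h2 ((1 + Real.sqrt ((S 0 0) ^ 2 + (S 1 0) ^ 2)) / 2) +
        h2 ((1 + Real.sqrt ((S 0 1) ^ 2 + (S 1 1) ^ 2)) / 2) := by
  obtain ⟨hU10, hU01, hU11⟩ := Matrix.sq_apply_of_transpose_mul_self_eq_one hU.1
  have hcol (j : Fin 2) : S 0 j ^ 2 + S 1 j ^ 2 = U 0 j ^ 2 * d1 ^ 2 + U 1 j ^ 2 * d2 ^ 2 := by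
    have := Matrix.sum_sq_mul_apply_of_transpose_mul_self_eq_one hV.1
      (Matrix.diagonal ![d1, d2] * U) j
    simp only [Fin.sum_univ_two, Matrix.diagonal_mul, Matrix.cons_val_zero, Matrix.cons_val_one,
      ← Matrix.mul_assoc, ← hS] at this
    linear_combination this
  have sq_mem {d : ℝ} (hd : d ∈ Icc (-1 : ℝ) 1) : d ^ 2 ∈ Icc (0 : ℝ) 1 :=
    ⟨sq_nonneg d, (sq_le_one_iff_abs_le_one d).2 (abs_le.2 hd)⟩
  have key := concaveOn_h2_one_add_sqrt_div_two.add_le_add_convexComb_swap (sq_mem hd1)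
    (sq_mem hd2) (sq_nonneg (U 0 0)) (by nlinarith [sq_nonneg (U 1 0)])
  rw [h2_one_add_div_two_eq_sqrt_sq d1, h2_one_add_div_two_eq_sqrt_sq d2, hcol 0, hcol 1,
    hU10, hU01, hU11]
  simpa only [smul_eq_mul] using key
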